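/- arXiv:1102.4018 — 8 statements merged into one kernel-verified Lean document; each statement's English description precedes it below -/
import Mathlib

section
/- Let Z be a complex Hilbert space and T = L + A a continuous ℝ-linear bijection of Z with continuous inverse, where L is continuous ℂ-linear and A is continuous conjugate-linear. Then the following conditions are equivalent: (1) T is a symplectomorphism; (2) (L* − A*)∘(L + A) = Id; (3) (L* + A*)∘(L − A) = Id; (4) L*∘L − A*∘A = Id and L*∘A = A*∘L; (5) L* − A* is a symplectomorphism; (6) L − A is a symplectomorphism; (7) L∘L* − A∘A* = Id and A*∘L = L*∘A. -/
/-!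
Write `T = L + A` and `U = L* - A*`. Since `Im ⟨A z, w⟩ = -Im ⟨z, A* w⟩`, one has
`σ(T z, w) = Im ⟨z, U w⟩`; as `σ` is nondegenerate, `T` preserves `σ` iff `U T = 1`, and then
`U = T⁻¹`. The same criterion applies to `L* - A*` and to `L - A`, whose companions are `L + A` and
`L* + A*`; this gives (5) and (6). Evaluating at `i z` separates the `ℂ`-linear and
conjugate-linear parts of `U T` and `T U`, which gives (2) ⟺ (3) ⟺ (4) and the first half of (7).

The remaining implication (7) ⟹ (4) is spectral. With `X = L* L - A* A - 1` (self-adjoint) and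
`D = A L* - L A*` (conjugate-linear and skew), (7) gives `T X = D T`, hence `T X² = D² T`. Now
`‖X‖²` is an approximate eigenvalue of `X²`, while `Re ⟨u, D² u⟩ = -‖D u‖² ≤ 0` keeps
`D² - ‖X‖²` bounded below by `‖X‖²`; transporting through `T` forces `X = 0`.
-/

noncomputable section

variable {Z : Type*} [NormedAddCommGroup Z] [InnerProductSpace ℂ Z] [CompleteSpace Z]

/-- The symplectic form `σ(z₁, z₂) = Im ⟨z₁, z₂⟩` on a complex Hilbert space. -/
def symplecticForm (z₁ z₂ : Z) : ℝ := (inner ℂ z₁ z₂ : ℂ).im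

/-- A symplectomorphism of `Z`: a continuous `ℝ`-linear bijection with continuous inverse
preserving the symplectic form `σ`. -/
def IsSymplectomorphism (f : Z → Z) : Prop :=
  ∃ e : Z ≃L[ℝ] Z, (∀ z, e z = f z) ∧
    ∀ z₁ z₂ : Z, symplecticForm (f z₁) (f z₂) = symplecticForm z₁ z₂

open scoped InnerProductSpace
open ContinuousLinearMap (adjoint adjoint_inner_left adjoint_inner_right comp_apply)

theorem comp_linear_add_conjLinear_eq_id_iff {V W : Type*} [AddCommGroup V] [Module ℂ V]
    [AddCommGroup W] [Module ℂ W] (L : V →ₗ[ℂ] W) (A : V →ₗ⋆[ℂ] W) (M : W →ₗ[ℂ] V)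
    (B : W →ₗ⋆[ℂ] V) :
    (∀ z, M (L z + A z) + B (L z + A z) = z) ↔
      (∀ z, M (L z) + B (A z) = z) ∧ ∀ z, M (A z) + B (L z) = 0 := by
  constructor
  · intro h
    have hsum (z : V) : (M (L z) + B (A z)) + (M (A z) + B (L z)) = z := by
      have := h z
      simp only [map_add] at this
      linear_combination (norm := module) this
    have hdiff (z : V) : (M (L z) + B (A z)) - (M (A z) + B (L z)) = z := by
      have hI := h (Complex.I • z)
      -- at `I • z` the conjugate-linear terms change sign relative to the linear ones
      simp only [map_add, map_smul, map_smulₛₗ, Complex.conj_I, neg_smul, map_neg] at hI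
      apply smul_right_injective V Complex.I_ne_zero
      linear_combination (norm := module) hI
    refine ⟨fun z => ?_, fun z => ?_⟩
    · linear_combination (norm := module) (1 / 2 : ℂ) • (hsum z + hdiff z)
    · linear_combination (norm := module) (1 / 2 : ℂ) • (hsum z - hdiff z)
  · rintro ⟨h₁, h₂⟩ z
    simp only [map_add]
    linear_combination (norm := module) h₁ z + h₂ z

section

variable {E : Type*} [NormedAddCommGroup E] [InnerProductSpace ℂ E]

theorem ext_im_inner_left {x y : E} (h : ∀ v, (⟪v, x⟫_ℂ).im = (⟪v, y⟫_ℂ).im) : x = y := by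
  obtain ⟨w, rfl⟩ : ∃ w, x = y + w := ⟨x - y, by abel⟩
  have hI := h (Complex.I • w)
  simpa [inner_add_right, inner_smul_left, Complex.mul_im, ← Complex.ofReal_pow] using hI

def IsConjAdjoint (A A' : E → E) : Prop := ∀ z₁ z₂, ⟪z₁, A z₂⟫_ℂ = ⟪z₂, A' z₁⟫_ℂ

theorem IsConjAdjoint.symm {A A' : E → E} (h : IsConjAdjoint A A') : IsConjAdjoint A' A :=
  fun z₁ z₂ => (h z₂ z₁).symm

theorem IsConjAdjoint.neg {A A' : E → E} (h : IsConjAdjoint A A') : IsConjAdjoint (-A) (-A') :=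
  fun z₁ z₂ => by simp only [Pi.neg_apply, inner_neg_right, h z₁ z₂]

def conjLinearToReal (A : E →SL[starRingEnd ℂ] E) : E →L[ℝ] E :=
  AddMonoidHom.toRealLinearMap (A : E →+ E) A.continuous

theorem re_inner_smul_self (u : E) (s : ℝ) : RCLike.re ⟪u, s • u⟫_ℂ = s * ‖u‖ ^ 2 := by
  rw [RCLike.real_smul_eq_coe_smul (K := ℂ), inner_smul_right, inner_self_eq_norm_sq_to_K]
  norm_cast

theorem mul_norm_le_norm_sub_smul {u v : E} (huv : RCLike.re ⟪u, v⟫_ℂ ≤ 0) (s : ℝ) :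
    s * ‖u‖ ≤ ‖v - s • u‖ := by
  rcases (norm_nonneg u).eq_or_lt with hu | hu
  · rw [← hu, mul_zero]; exact norm_nonneg _
  have : s * ‖u‖ ^ 2 ≤ ‖u‖ * ‖v - s • u‖ :=
    calc s * ‖u‖ ^ 2 ≤ RCLike.re ⟪u, s • u - v⟫_ℂ := by
          rw [inner_sub_right, map_sub, re_inner_smul_self]; linarith
      _ ≤ ‖u‖ * ‖s • u - v‖ := re_inner_le_norm _ _
      _ = ‖u‖ * ‖v - s • u‖ := by rw [norm_sub_rev]
  nlinarith

theorem norm_apply_apply_sub_smul_sq_le {X : E →L[ℂ] E} (hX : (X : E →ₗ[ℂ] E).IsSymmetric)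
    (x : E) :
    ‖X (X x) - ‖X‖ ^ 2 • x‖ ^ 2 ≤ ‖X‖ ^ 2 * (‖X‖ ^ 2 * ‖x‖ ^ 2 - ‖X x‖ ^ 2) := by
  have hre : RCLike.re ⟪X (X x), ‖X‖ ^ 2 • x⟫_ℂ = ‖X‖ ^ 2 * ‖X x‖ ^ 2 := by
    rw [← ContinuousLinearMap.coe_coe X, hX, ContinuousLinearMap.coe_coe, X.map_smul_of_tower,
      re_inner_smul_self]
  have hXX : ‖X (X x)‖ ^ 2 ≤ ‖X‖ ^ 2 * ‖X x‖ ^ 2 := by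
    rw [← mul_pow]; exact pow_le_pow_left₀ (norm_nonneg _) (X.le_opNorm _) 2
  rw [norm_sub_sq (𝕜 := ℂ), hre, norm_smul, Real.norm_of_nonneg (by positivity)]
  nlinarith

theorem ContinuousLinearMap.opNorm_sq_le_of_forall {X : E →L[ℂ] E} {c : ℝ} (hc : 0 ≤ c)
    (h : ∀ x, ‖X x‖ ^ 2 ≤ c * ‖x‖ ^ 2) : ‖X‖ ^ 2 ≤ c := by
  have : ‖X‖ ≤ √c := X.opNorm_le_bound (Real.sqrt_nonneg c) fun x => by
    rw [← Real.sqrt_sq (norm_nonneg (X x)), ← Real.sqrt_sq (norm_nonneg x), ← Real.sqrt_mul hc]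
    exact Real.sqrt_le_sqrt (h x)
  calc ‖X‖ ^ 2 ≤ √c ^ 2 := pow_le_pow_left₀ (norm_nonneg _) this 2
    _ = c := Real.sq_sqrt hc

theorem eq_zero_of_semiconj_sq {X : E →L[ℂ] E} (hX : (X : E →ₗ[ℂ] E).IsSymmetric)
    (T : E ≃L[ℝ] E) {N : E → E} (hN : ∀ u, RCLike.re ⟪u, N u⟫_ℂ ≤ 0)
    (hTX : ∀ z, T (X (X z)) = N (T z)) : X = 0 := by
  by_contra hX0
  have : Nontrivial E := by
    by_contra h
    rw [not_nontrivial_iff_subsingleton] at h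
    exact hX0 (Subsingleton.elim _ _)
  set s := ‖X‖ ^ 2
  set K := ‖(T : E →L[ℝ] E)‖ * ‖(T.symm : E →L[ℝ] E)‖
  have hs : 0 < s := by have := norm_pos_iff.mpr hX0; positivity
  have hK : 1 ≤ K := T.one_le_norm_mul_norm_symm
  have lower (z : E) : s * ‖z‖ ≤ K * ‖X (X z) - s • z‖ :=
    calc s * ‖z‖ ≤ s * (‖(T.symm : E →L[ℝ] E)‖ * ‖T z‖) := by
          gcongr
          simpa using (T.symm : E →L[ℝ] E).le_opNorm (T z)
      _ ≤ ‖(T.symm : E →L[ℝ] E)‖ * ‖N (T z) - s • T z‖ := by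
          rw [mul_left_comm]; gcongr; exact mul_norm_le_norm_sub_smul (hN _) s
      _ = ‖(T.symm : E →L[ℝ] E)‖ * ‖T (X (X z) - s • z)‖ := by rw [map_sub, map_smul, hTX]
      _ ≤ ‖(T.symm : E →L[ℝ] E)‖ * (‖(T : E →L[ℝ] E)‖ * ‖X (X z) - s • z‖) := by
          gcongr; exact (T : E →L[ℝ] E).le_opNorm _
      _ = K * ‖X (X z) - s • z‖ := by ring
  have bound (x : E) : ‖X x‖ ^ 2 ≤ (s - s / K ^ 2) * ‖x‖ ^ 2 := by
    have hsq : s * (s * ‖x‖ ^ 2) ≤ s * (K ^ 2 * (s * ‖x‖ ^ 2 - ‖X x‖ ^ 2)) :=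
      calc s * (s * ‖x‖ ^ 2) = (s * ‖x‖) ^ 2 := by ring
        _ ≤ (K * ‖X (X x) - s • x‖) ^ 2 := pow_le_pow_left₀ (by positivity) (lower x) 2
        _ ≤ K ^ 2 * (s * (s * ‖x‖ ^ 2 - ‖X x‖ ^ 2)) := by
            rw [mul_pow]; gcongr; exact norm_apply_apply_sub_smul_sq_le hX x
        _ = s * (K ^ 2 * (s * ‖x‖ ^ 2 - ‖X x‖ ^ 2)) := by ring
    have := le_of_mul_le_mul_left hsq hs
    rw [sub_mul, div_mul_eq_mul_div, le_sub_iff_add_le, ← le_sub_iff_add_le',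
      div_le_iff₀ (by positivity)]
    linarith
  have hsK : 0 < s / K ^ 2 := by positivity
  have hsK' : s / K ^ 2 ≤ s := div_le_self hs.le (one_le_pow₀ hK)
  linarith [X.opNorm_sq_le_of_forall (by linarith) bound]

end

theorem symplecticForm_add_apply_left {L : Z →L[ℂ] Z} {A A' : Z → Z} (hA : IsConjAdjoint A A')
    (z w : Z) : symplecticForm (L z + A z) w = (⟪z, adjoint L w - A' w⟫_ℂ).im := by
  rw [symplecticForm, inner_add_left, inner_sub_right, adjoint_inner_right, ← hA w z,
    ← inner_conj_symm w (A z), Complex.add_im, Complex.sub_im, Complex.conj_im, sub_neg_eq_add]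

theorem forall_symplecticForm_eq_iff {f : Z → Z} {L : Z →L[ℂ] Z} {A A' : Z → Z}
    (hf : ∀ z, f z = L z + A z) (hA : IsConjAdjoint A A') :
    (∀ z₁ z₂, symplecticForm (f z₁) (f z₂) = symplecticForm z₁ z₂) ↔
      ∀ z, adjoint L (f z) - A' (f z) = z := by
  constructor
  · intro h z
    refine ext_im_inner_left fun v => ?_
    rw [← symplecticForm_add_apply_left hA, ← hf, h, symplecticForm]
  · intro h z₁ z₂
    rw [hf z₁, symplecticForm_add_apply_left hA, h, symplecticForm]

theorem isSymplectomorphism_iff {f : Z → Z} {L : Z →L[ℂ] Z} {A A' : Z →SL[starRingEnd ℂ] Z}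
    (hf : ∀ z, f z = L z + A z) (hA : IsConjAdjoint A A') :
    IsSymplectomorphism f ↔
      (∀ z, adjoint L (f z) - A' (f z) = z) ∧ ∀ z, f (adjoint L z - A' z) = z := by
  rw [IsSymplectomorphism, ← forall_symplecticForm_eq_iff hf hA]
  constructor
  · rintro ⟨e, he, hσ⟩
    have hsurj : Function.Surjective f := by simpa only [← funext he] using e.surjective
    have hleft : Function.LeftInverse (fun z => adjoint L z - A' z) f :=
      (forall_symplecticForm_eq_iff hf hA).1 hσ
    exact ⟨hσ, hleft.rightInverse_of_surjective hsurj⟩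
  · rintro ⟨hσ, hright⟩
    let F : Z →L[ℝ] Z := L.restrictScalars ℝ + conjLinearToReal A
    let G : Z →L[ℝ] Z := (adjoint L).restrictScalars ℝ - conjLinearToReal A'
    have hF : ⇑F = f := funext fun z => (hf z).symm
    have hleft : Function.LeftInverse G F := by
      rw [hF]; exact (forall_symplecticForm_eq_iff hf hA).1 hσ
    exact ⟨.equivOfInverse F G hleft (by rw [hF]; exact hright), congrFun hF, hσ⟩

theorem adjoint_sub_comp_add_eq_id_iff (L : Z →L[ℂ] Z) (A A' : Z →SL[starRingEnd ℂ] Z) :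
    (∀ z, adjoint L (L z + A z) - A' (L z + A z) = z) ↔
      (∀ z, adjoint L (L z) - A' (A z) = z) ∧ ∀ z, adjoint L (A z) = A' (L z) := by
  simpa [sub_eq_add_neg, add_neg_eq_zero] using
    comp_linear_add_conjLinear_eq_id_iff (L : Z →ₗ[ℂ] Z) (A : Z →ₗ⋆[ℂ] Z) (adjoint L : Z →ₗ[ℂ] Z)
      (-A' : Z →ₗ⋆[ℂ] Z)

theorem semiconj_adjoint_comp_sub_sub_one (T : Z ≃L[ℝ] Z) {L : Z →L[ℂ] Z}
    {A A' : Z →SL[starRingEnd ℂ] Z} (hT : ∀ z, T z = L z + A z)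
    (hQ : ∀ z, L (adjoint L z) - A (A' z) = z) (hP : ∀ z, adjoint L (A z) = A' (L z)) (z : Z) :
    T ((adjoint L ∘L L - A'.comp A - 1) z) = (A.comp (adjoint L) - L.comp A') (T z) := by
  have hL := hQ (L z)
  have hA := hQ (A z)
  rw [← hP] at hL
  simp only [hT, sub_apply, comp_apply, one_apply_eq_self, map_add, map_sub, ← hP]
  linear_combination (norm := module) hL + hA

theorem adjoint_comp_self_sub_eq_id (T : Z ≃L[ℝ] Z) {L : Z →L[ℂ] Z}
    {A A' : Z →SL[starRingEnd ℂ] Z} (hT : ∀ z, T z = L z + A z) (hA : IsConjAdjoint A A')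
    (hQ : ∀ z, L (adjoint L z) - A (A' z) = z) (hP : ∀ z, adjoint L (A z) = A' (L z)) :
    ∀ z, adjoint L (L z) - A' (A z) = z := by
  set X : Z →L[ℂ] Z := adjoint L ∘L L - A'.comp A - 1 with hX
  set D : Z →SL[starRingEnd ℂ] Z := A.comp (adjoint L) - L.comp A'
  have hXsymm : (X : Z →ₗ[ℂ] Z).IsSymmetric := fun v w => by
    have hA'A (v w : Z) : ⟪A' (A v), w⟫_ℂ = ⟪A w, A v⟫_ℂ := by
      rw [← inner_conj_symm, hA.symm w (A v), inner_conj_symm]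
    simp only [hX, ContinuousLinearMap.coe_coe, sub_apply, comp_apply, one_apply_eq_self,
      inner_sub_left, inner_sub_right, adjoint_inner_left, adjoint_inner_right, hA'A,
      hA.symm v (A w)]
  have hDskew (v w : Z) : ⟪v, D w⟫_ℂ = -⟪w, D v⟫_ℂ := by
    simp only [D, sub_apply, comp_apply, inner_sub_right, hA _ (adjoint L _), ← adjoint_inner_left]
    ring
  have hDD (u : Z) : RCLike.re ⟪u, D (D u)⟫_ℂ ≤ 0 := by
    rw [hDskew, map_neg, inner_self_eq_norm_sq]
    exact neg_nonpos.2 (sq_nonneg _)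
  have hX0 : X = 0 := eq_zero_of_semiconj_sq hXsymm T hDD fun z => by
    rw [semiconj_adjoint_comp_sub_sub_one T hT hQ hP, semiconj_adjoint_comp_sub_sub_one T hT hQ hP]
  intro z
  simpa [hX, sub_eq_zero] using congr($hX0 z)

/-- Equivalent characterizations of symplectomorphisms `T = L + A`. -/
theorem stmt_1 (T : Z ≃L[ℝ] Z) (L : Z →L[ℂ] Z) (A A' : Z →SL[starRingEnd ℂ] Z)
    (hT : ∀ z : Z, T z = L z + A z)
    (hA' : ∀ z₁ z₂ : Z, (inner ℂ z₁ (A z₂) : ℂ) = (inner ℂ z₂ (A' z₁) : ℂ)) :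
    List.TFAE [
      IsSymplectomorphism (T : Z → Z),
      ∀ z : Z, ContinuousLinearMap.adjoint L (L z + A z) - A' (L z + A z) = z,
      ∀ z : Z, ContinuousLinearMap.adjoint L (L z - A z) + A' (L z - A z) = z,
      (∀ z : Z, ContinuousLinearMap.adjoint L (L z) - A' (A z) = z) ∧
        (∀ z : Z, ContinuousLinearMap.adjoint L (A z) = A' (L z)),
      IsSymplectomorphism (fun z : Z => ContinuousLinearMap.adjoint L z - A' z),
      IsSymplectomorphism (fun z : Z => L z - A z),
      (∀ z : Z, L (ContinuousLinearMap.adjoint L z) - A (A' z) = z) ∧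
        (∀ z : Z, A' (L z) = ContinuousLinearMap.adjoint L (A z))
    ] := by
  have hA : IsConjAdjoint A A' := hA'
  have hUT : (∀ z, adjoint L (T z) - A' (T z) = z) ↔
      (∀ z, adjoint L (L z) - A' (A z) = z) ∧ ∀ z, adjoint L (A z) = A' (L z) := by
    simpa only [hT] using adjoint_sub_comp_add_eq_id_iff L A A'
  have hTU : (∀ z, T (adjoint L z - A' z) = z) ↔
      (∀ z, adjoint L (L z) - A' (A z) = z) ∧ ∀ z, adjoint L (A z) = A' (L z) :=
    ⟨fun h => hUT.1 (Function.RightInverse.leftInverse_of_injective h T.injective),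
      fun h => Function.LeftInverse.rightInverse_of_surjective (hUT.2 h) T.surjective⟩
  have hQ : ((∀ z, L (adjoint L z) - A (A' z) = z) ∧ ∀ z, L (A' z) = A (adjoint L z)) ↔
      (∀ z, adjoint L (L z) - A' (A z) = z) ∧ ∀ z, adjoint L (A z) = A' (L z) := by
    rw [← hTU]
    simpa [hT, sub_eq_add_neg] using (adjoint_sub_comp_add_eq_id_iff (adjoint L) (-A') (-A)).symm
  tfae_have 1 ↔ 4 := by rw [isSymplectomorphism_iff hT hA, hUT, hTU, and_self]
  tfae_have 2 ↔ 4 := adjoint_sub_comp_add_eq_id_iff L A A'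
  tfae_have 3 ↔ 4 := by simpa [sub_eq_add_neg] using adjoint_sub_comp_add_eq_id_iff L (-A) (-A')
  tfae_have 5 ↔ 4 := by
    rw [isSymplectomorphism_iff (f := fun z => adjoint L z - A' z) (L := adjoint L) (A := -A')
      (A' := -A) (fun z => sub_eq_add_neg _ _) hA.symm.neg]
    simp only [ContinuousLinearMap.adjoint_adjoint, neg_apply, sub_neg_eq_add, ← hT]
    rw [hTU, hUT, and_self]
  tfae_have 6 ↔ 4 := by
    have hdual := adjoint_sub_comp_add_eq_id_iff (adjoint L) A' A
    rw [ContinuousLinearMap.adjoint_adjoint] at hdual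
    rw [isSymplectomorphism_iff (f := fun z => L z - A z) (L := L) (A := -A) (A' := -A')
      (fun z => sub_eq_add_neg _ _) hA.neg]
    simp only [neg_apply, sub_neg_eq_add]
    rw [tfae_3_iff_4, hdual, hQ, and_self]
  tfae_have 7 ↔ 4 :=
    ⟨fun ⟨hQ, hP⟩ => ⟨adjoint_comp_self_sub_eq_id T hT hA hQ fun z => (hP z).symm,
        fun z => (hP z).symm⟩,
      fun h => ⟨(hQ.2 h).1, fun z => (h.2 z).symm⟩⟩
  tfae_finish
end
end

section
/- Let Z be a complex Hilbert space and T = L + A a symplectomorphism of Z, with L continuous ℂ-linear and A continuous conjugate-linear. Then L is bijective with continuous inverse; in particular L*∘L = Id + A*∘A and L∘L* = Id + A∘A*, so L and L* are injective with closed dense range. -/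
/-!
Since `σ` is nondegenerate, `T` being symplectic says exactly that its symplectic adjoint
`L* - A*` is its inverse. Expanding `(L* - A*) ∘ (L + A) = id` and `(L + A) ∘ (L* - A*) = id` and
keeping the `ℂ`-linear parts gives `L* L = 1 + A* A` and `L L* = 1 + A A*`. Hence
`‖L z‖² = ‖z‖² + ‖A z‖²` and `‖L* z‖² = ‖z‖² + ‖A* z‖²`, so `L` and `L*` are bounded below:
injective with closed range. Each has dense range because the other is injective, so `L` is a
bijection, and the open mapping theorem makes its inverse continuous.
-/

open ContinuousLinearMap Complex
open scoped InnerProductSpace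

section Splitting

variable {E F : Type*} [AddCommGroup E] [Module ℂ E] [AddCommGroup F] [Module ℂ F]

theorem LinearMap.apply_eq_zero_of_add_conjLinear_eq_zero (M : E →ₗ[ℂ] F) (N : E →ₗ⋆[ℂ] F)
    (h : ∀ z, M z + N z = 0) (z : E) : M z = 0 := by
  have hI : I • (M z - N z) = 0 := by
    simpa [smul_sub, sub_eq_add_neg] using h (I • z)
  have hsub := (smul_eq_zero.mp hI).resolve_left I_ne_zero
  have h2 : (2 : ℂ) • M z = 0 := by linear_combination (norm := module) h z + hsub
  exact (smul_eq_zero.mp h2).resolve_left two_ne_zero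

theorem LinearMap.apply_apply_eq_of_sub_apply_add_eq_self (L L' : E →ₗ[ℂ] E) (A A' : E →ₗ⋆[ℂ] E)
    (h : ∀ z, L' (L z + A z) - A' (L z + A z) = z) (z : E) : L' (L z) = z + A' (A z) := by
  have := (L' ∘ₗ L - A' ∘ₛₗ A - LinearMap.id).apply_eq_zero_of_add_conjLinear_eq_zero
    (L' ∘ₛₗ A - A' ∘ₛₗ L) (fun z => by
      have hz := h z
      simp only [map_add] at hz
      simp only [LinearMap.sub_apply, LinearMap.comp_apply, LinearMap.id_apply]
      linear_combination (norm := module) hz) z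
  simp only [LinearMap.sub_apply, LinearMap.comp_apply, LinearMap.id_apply] at this
  linear_combination (norm := module) this

end Splitting

section InnerProduct

variable {E : Type*} [NormedAddCommGroup E] [InnerProductSpace ℂ E]

theorem eq_zero_of_forall_im_inner_eq_zero {w : E} (h : ∀ u, (⟪u, w⟫_ℂ).im = 0) : w = 0 := by
  have := h (I • w)
  rw [inner_smul_left, inner_self_eq_norm_sq_to_K] at this
  simpa [← ofReal_pow] using this

variable [CompleteSpace E] (L : E →L[ℂ] E) {A A' : E →SL[starRingEnd ℂ] E}
  (hA : ∀ z₁ z₂, ⟪z₁, A z₂⟫_ℂ = ⟪z₂, A' z₁⟫_ℂ)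
include hA

theorem im_inner_add_apply_left (u w : E) :
    (⟪L u + A u, w⟫_ℂ).im = (⟪u, adjoint L w - A' w⟫_ℂ).im := by
  rw [inner_add_left, ← adjoint_inner_right, ← inner_conj_symm (A u), hA, inner_sub_right]
  simp only [add_im, sub_im, conj_im]
  ring

theorem adjoint_apply_sub_apply_eq_self {T : E → E} (hT : ∀ z, T z = L z + A z)
    (hsymp : ∀ z₁ z₂, (⟪T z₁, T z₂⟫_ℂ).im = (⟪z₁, z₂⟫_ℂ).im) (z : E) :
    adjoint L (T z) - A' (T z) = z :=
  sub_eq_zero.mp <| eq_zero_of_forall_im_inner_eq_zero fun u => by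
    rw [inner_sub_right, sub_im, ← im_inner_add_apply_left L hA, ← hT, hsymp, sub_self]

theorem antilipschitzWith_one_of_adjoint_apply_apply_eq (h : ∀ z, adjoint L (L z) = z + A' (A z)) :
    AntilipschitzWith 1 L := by
  refine L.antilipschitz_of_bound fun z => ?_
  have hnorm : ‖z‖ ^ 2 + ‖A z‖ ^ 2 = ‖L z‖ ^ 2 := by
    have := adjoint_inner_right L z (L z)
    rw [h, inner_add_right, ← hA, inner_self_eq_norm_sq_to_K, inner_self_eq_norm_sq_to_K,
      inner_self_eq_norm_sq_to_K] at this
    exact_mod_cast this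
  rw [NNReal.coe_one, one_mul, ← sq_le_sq₀ (norm_nonneg _) (norm_nonneg _)]
  linarith [sq_nonneg ‖A z‖]

end InnerProduct

namespace ContinuousLinearMap

variable {𝕜 E F : Type*} [RCLike 𝕜] [NormedAddCommGroup E] [InnerProductSpace 𝕜 E] [CompleteSpace E]
  [NormedAddCommGroup F] [InnerProductSpace 𝕜 F] [CompleteSpace F]

theorem dense_range_of_injective_adjoint (M : E →L[𝕜] F) (h : Function.Injective (adjoint M)) :
    Dense (Set.range M) := by
  have : M.rangeᗮ = ⊥ := by
    rw [orthogonal_range, LinearMap.ker_eq_bot]; exact h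
  simpa [LinearMap.coe_range] using Submodule.dense_iff_topologicalClosure_eq_top.mpr
    (Submodule.topologicalClosure_eq_top_iff.mpr this)

end ContinuousLinearMap

/-- If `T = L + A` is a symplectomorphism of the complex Hilbert space `Z`
(`L` continuous `ℂ`-linear, `A` continuous conjugate-linear with adjoint `A'`), then `L` is
bijective with continuous inverse; in particular `L*∘L = Id + A*∘A` and `L∘L* = Id + A∘A*`,
so `L` and `L*` are injective with closed dense range. -/
theorem stmt_2 {Z : Type*} [NormedAddCommGroup Z] [InnerProductSpace ℂ Z] [CompleteSpace Z]
    (T : Z ≃L[ℝ] Z) (L : Z →L[ℂ] Z) (A A' : Z →SL[starRingEnd ℂ] Z)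
    (hT : ∀ z : Z, T z = L z + A z)
    (hA' : ∀ z₁ z₂ : Z, (inner ℂ z₁ (A z₂) : ℂ) = (inner ℂ z₂ (A' z₁) : ℂ))
    (hsymp : ∀ z₁ z₂ : Z, (inner ℂ (T z₁) (T z₂) : ℂ).im = (inner ℂ z₁ z₂ : ℂ).im) :
    (∃ e : Z ≃L[ℂ] Z, ∀ z : Z, e z = L z) ∧
    (∀ z : Z, ContinuousLinearMap.adjoint L (L z) = z + A' (A z)) ∧
    (∀ z : Z, L (ContinuousLinearMap.adjoint L z) = z + A (A' z)) ∧
    Function.Injective (L : Z → Z) ∧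
    Function.Injective (ContinuousLinearMap.adjoint L : Z → Z) ∧
    IsClosed (Set.range (L : Z → Z)) ∧ Dense (Set.range (L : Z → Z)) ∧
    IsClosed (Set.range (ContinuousLinearMap.adjoint L : Z → Z)) ∧
    Dense (Set.range (ContinuousLinearMap.adjoint L : Z → Z)) := by
  have hinv := adjoint_apply_sub_apply_eq_self L hA' hT hsymp
  have hinv' (w : Z) : L (adjoint L w - A' w) + A (adjoint L w - A' w) = w := by
    have := hinv (T.symm w)
    rw [T.apply_symm_apply] at this
    rw [← hT, this, T.apply_symm_apply]
  have hLL : ∀ z, adjoint L (L z) = z + A' (A z) :=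
    LinearMap.apply_apply_eq_of_sub_apply_add_eq_self (L : Z →ₗ[ℂ] Z) (adjoint L : Z →ₗ[ℂ] Z)
      (A : Z →ₗ⋆[ℂ] Z) (A' : Z →ₗ⋆[ℂ] Z) fun z => by simpa [hT] using hinv z
  -- `(L + A) ∘ (L* - A') = id` is the identity behind `hLL` for the pair `(L*, -A')`.
  have hLL' : ∀ z, L (adjoint L z) = z + A (A' z) := by
    simpa using LinearMap.apply_apply_eq_of_sub_apply_add_eq_self (adjoint L : Z →ₗ[ℂ] Z)
      (L : Z →ₗ[ℂ] Z) (-A' : Z →ₗ⋆[ℂ] Z) (-A : Z →ₗ⋆[ℂ] Z) fun w => by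
        convert hinv' w using 1
        simp only [coe_coe, LinearMap.neg_apply, map_add, map_neg, neg_neg, map_sub]
        abel
  have hL := antilipschitzWith_one_of_adjoint_apply_apply_eq L hA' hLL
  have hL' := antilipschitzWith_one_of_adjoint_apply_apply_eq (adjoint L)
    (fun z₁ z₂ => (hA' z₂ z₁).symm) (by simpa only [adjoint_adjoint] using hLL')
  have hdense := L.dense_range_of_injective_adjoint hL'.injective
  have hdense' := (adjoint L).dense_range_of_injective_adjoint
    (by simpa only [adjoint_adjoint] using hL.injective)
  have hclosed := hL.isClosed_range L.uniformContinuous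
  have hsurj : Function.Surjective L :=
    Set.range_eq_univ.mp (hclosed.closure_eq ▸ hdense.closure_eq)
  exact ⟨⟨.ofBijective L (LinearMap.ker_eq_bot.mpr hL.injective)
      (LinearMap.range_eq_top.mpr hsurj), fun _ => rfl⟩,
    hLL, hLL', hL.injective, hL'.injective, hclosed, hdense,
    hL'.isClosed_range (adjoint L).uniformContinuous, hdense'⟩
end

section
/- Let Z be a complex Hilbert space and T = L + A a symplectomorphism of Z, with L continuous ℂ-linear and A continuous conjugate-linear. Then ‖L z‖ ≥ ‖z‖ for every z ∈ Z; in particular the operator norm of L satisfies ‖L‖ ≥ 1. -/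
/-!
Pair the symplectic form with the complex structure: `σ(z, i z) = ‖z‖²`. Since `L` commutes
and `A` anticommutes with multiplication by `i`, we get `T (i z) = i (L z - A z)`, and
`σ(L z + A z, i (L z - A z)) = re ⟪L z + A z, L z - A z⟫ = ‖L z‖² - ‖A z‖²`. Hence
`‖z‖² + ‖A z‖² = ‖L z‖²`.
-/

open Complex

lemma re_inner_add_sub {𝕜 E : Type*} [RCLike 𝕜] [NormedAddCommGroup E] [InnerProductSpace 𝕜 E]
    (u v : E) : RCLike.re (inner 𝕜 (u + v) (u - v)) = ‖u‖ ^ 2 - ‖v‖ ^ 2 := by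
  simp only [inner_add_left, inner_sub_right, map_add, map_sub, inner_self_eq_norm_sq,
    inner_re_symm (𝕜 := 𝕜) v u]
  ring

section ComplexInnerProductSpace

variable {E : Type*} [NormedAddCommGroup E] [InnerProductSpace ℂ E]

lemma im_inner_I_smul_right (u v : E) : (inner ℂ u (I • v)).im = (inner ℂ u v).re := by
  simp only [inner_smul_right, mul_im, I_re, I_im]
  ring

lemma im_inner_add_I_smul_sub (u v : E) :
    (inner ℂ (u + v) (I • (u - v))).im = ‖u‖ ^ 2 - ‖v‖ ^ 2 := by
  rw [im_inner_I_smul_right]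
  exact re_inner_add_sub (𝕜 := ℂ) u v

lemma im_inner_I_smul_self (z : E) : (inner ℂ z (I • z)).im = ‖z‖ ^ 2 := by
  rw [im_inner_I_smul_right]
  exact inner_self_eq_norm_sq (𝕜 := ℂ) z

lemma add_semilinear_apply_I_smul (L : E →L[ℂ] E) (A : E →SL[starRingEnd ℂ] E) (z : E) :
    L (I • z) + A (I • z) = I • (L z - A z) := by
  rw [map_smul, map_smulₛₗ, starRingEnd_apply, star_def, conj_I, smul_sub, neg_smul,
    sub_eq_add_neg]

end ComplexInnerProductSpace

lemma ContinuousLinearMap.one_le_opNorm_of_le_norm_apply {𝕜 E F : Type*}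
    [NontriviallyNormedField 𝕜] [NormedAddCommGroup E] [NormedAddCommGroup F] [NormedSpace 𝕜 E]
    [NormedSpace 𝕜 F] [Nontrivial E] (f : E →L[𝕜] F) (h : ∀ z, ‖z‖ ≤ ‖f z‖) : 1 ≤ ‖f‖ := by
  obtain ⟨x, hx⟩ := exists_ne (0 : E)
  have hx_pos : 0 < ‖x‖ := norm_pos_iff.mpr hx
  exact le_of_mul_le_mul_right (by simpa using (h x).trans (f.le_opNorm x)) hx_pos

theorem stmt_3_general {Z : Type*} [NormedAddCommGroup Z] [InnerProductSpace ℂ Z]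
    [Nontrivial Z]
    (T : Z ≃L[ℝ] Z) (L : Z →L[ℂ] Z) (A : Z →SL[starRingEnd ℂ] Z)
    (hT : ∀ z : Z, T z = L z + A z)
    (hsymp : ∀ z₁ z₂ : Z, (inner ℂ (T z₁) (T z₂) : ℂ).im = (inner ℂ z₁ z₂ : ℂ).im) :
    (∀ z : Z, ‖z‖ ≤ ‖L z‖) ∧ 1 ≤ ‖L‖ := by
  have norm_sq_add : ∀ z : Z, ‖z‖ ^ 2 + ‖A z‖ ^ 2 = ‖L z‖ ^ 2 := by
    intro z
    have h := hsymp z (I • z)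
    rw [hT, hT, add_semilinear_apply_I_smul, im_inner_add_I_smul_sub, im_inner_I_smul_self] at h
    linarith
  have le_norm_L : ∀ z : Z, ‖z‖ ≤ ‖L z‖ := fun z ↦
    (pow_le_pow_iff_left₀ (norm_nonneg _) (norm_nonneg _) two_ne_zero).mp <| by
      nlinarith [norm_sq_add z, sq_nonneg ‖A z‖]
  exact ⟨le_norm_L, L.one_le_opNorm_of_le_norm_apply le_norm_L⟩

/-- If `T = L + A` is a symplectomorphism of the (nonzero) complex Hilbert
space `Z`, with `L` continuous `ℂ`-linear and `A` continuous conjugate-linear, then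
`‖L z‖ ≥ ‖z‖` for every `z`, and in particular `‖L‖ ≥ 1`. -/
theorem stmt_3 {Z : Type*} [NormedAddCommGroup Z] [InnerProductSpace ℂ Z] [CompleteSpace Z]
    [Nontrivial Z]
    (T : Z ≃L[ℝ] Z) (L : Z →L[ℂ] Z) (A : Z →SL[starRingEnd ℂ] Z)
    (hT : ∀ z : Z, T z = L z + A z)
    (hsymp : ∀ z₁ z₂ : Z, (inner ℂ (T z₁) (T z₂) : ℂ).im = (inner ℂ z₁ z₂ : ℂ).im) :
    (∀ z : Z, ‖z‖ ≤ ‖L z‖) ∧ 1 ≤ ‖L‖ :=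
  stmt_3_general T L A hT hsymp
end

section
/- Let Z be a complex Hilbert space and T = L + A a symplectomorphism of Z, with L continuous ℂ-linear and A continuous conjugate-linear. Then the inverse of T is T⁻¹ = L* − A*, and T⁻¹ is again a symplectomorphism. -/
/-!
Since `T` preserves `σ`, `σ(T⁻¹ w, z) = σ(w, T z) = σ(L* w, z) - σ(A' w, z)` for all `z`, the sign
coming from the conjugate-linearity of `A`. The symplectic form is nondegenerate
(`Re ⟪u, z⟫ = Im ⟪u, I • z⟫`), so `T⁻¹ w = L* w - A' w`.
-/

open scoped InnerProductSpace

section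

variable {Z : Type*} [NormedAddCommGroup Z] [InnerProductSpace ℂ Z]

theorem ext_im_inner_right {x y : Z} (h : ∀ z, (⟪x, z⟫_ℂ).im = (⟪y, z⟫_ℂ).im) : x = y := by
  refine ext_inner_right ℂ fun z => Complex.ext ?_ (h z)
  simpa only [inner_smul_right, Complex.I_mul_im] using h (Complex.I • z)

theorem im_inner_apply_eq_neg_im_inner_of_conj_adjoint {A A' : Z →SL[starRingEnd ℂ] Z}
    (hA' : ∀ z₁ z₂ : Z, ⟪z₁, A z₂⟫_ℂ = ⟪z₂, A' z₁⟫_ℂ) (w z : Z) :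
    (⟪w, A z⟫_ℂ).im = -(⟪A' w, z⟫_ℂ).im := by
  rw [hA', ← inner_conj_symm, Complex.conj_im]

theorem im_inner_symm_symm {T : Z ≃L[ℝ] Z}
    (hsymp : ∀ z₁ z₂ : Z, (⟪T z₁, T z₂⟫_ℂ).im = (⟪z₁, z₂⟫_ℂ).im) (z₁ z₂ : Z) :
    (⟪T.symm z₁, T.symm z₂⟫_ℂ).im = (⟪z₁, z₂⟫_ℂ).im := by
  simpa only [T.apply_symm_apply] using (hsymp (T.symm z₁) (T.symm z₂)).symm

end

/-- If `T = L + A` is a symplectomorphism of the complex Hilbert space `Z`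
(`L` continuous `ℂ`-linear, `A` continuous conjugate-linear with adjoint `A'`), then
`T⁻¹ = L* - A'`, and `T⁻¹` is again a symplectomorphism. -/
theorem stmt_4 {Z : Type*} [NormedAddCommGroup Z] [InnerProductSpace ℂ Z] [CompleteSpace Z]
    (T : Z ≃L[ℝ] Z) (L : Z →L[ℂ] Z) (A A' : Z →SL[starRingEnd ℂ] Z)
    (hT : ∀ z : Z, T z = L z + A z)
    (hA' : ∀ z₁ z₂ : Z, (inner ℂ z₁ (A z₂) : ℂ) = (inner ℂ z₂ (A' z₁) : ℂ))
    (hsymp : ∀ z₁ z₂ : Z, (inner ℂ (T z₁) (T z₂) : ℂ).im = (inner ℂ z₁ z₂ : ℂ).im) :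
    (∀ z : Z, T.symm z = ContinuousLinearMap.adjoint L z - A' z) ∧
    (∀ z₁ z₂ : Z, (inner ℂ (T.symm z₁) (T.symm z₂) : ℂ).im = (inner ℂ z₁ z₂ : ℂ).im) := by
  refine ⟨fun w => ext_im_inner_right fun z => ?_, im_inner_symm_symm hsymp⟩
  calc (⟪T.symm w, z⟫_ℂ).im = (⟪w, T z⟫_ℂ).im := by
        simpa only [T.symm_apply_apply] using im_inner_symm_symm hsymp w (T z)
    _ = (⟪ContinuousLinearMap.adjoint L w, z⟫_ℂ).im + (⟪w, A z⟫_ℂ).im := by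
        rw [hT, inner_add_right, Complex.add_im, ContinuousLinearMap.adjoint_inner_left]
    _ = (⟪ContinuousLinearMap.adjoint L w - A' w, z⟫_ℂ).im := by
        rw [im_inner_apply_eq_neg_im_inner_of_conj_adjoint hA', inner_sub_left, Complex.sub_im,
          sub_eq_add_neg]
end

section
/- Let E be a nonzero finite-dimensional complex Hilbert space and f : E → E a conjugate-linear map such that f ∘ f = Id and ⟨z₁, f z₂⟩ = ⟨z₂, f z₁⟩ for all z₁, z₂ ∈ E. Then there exists an orthonormal basis (u_j) of E such that f(u_j) = u_j for every j. -/
/-!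
The fixed points of `f` form a real subspace `F`. The symmetry of `f` makes `⟪x, y⟫` real for
`x, y ∈ F`, and `f ∘ f = id` gives `E = F + i F`, since `2 z = (z + f z) - i (i (z - f z))` with
both brackets fixed by `f`. Hence any real orthonormal basis of `F` is a complex orthonormal
basis of `E`, and it consists of fixed points of `f`.
-/

open Complex

attribute [local instance] InnerProductSpace.complexToReal

section RealForm

variable {E : Type*} [NormedAddCommGroup E] [InnerProductSpace ℂ E]
  {F : Submodule ℝ E} (hF : ∀ x ∈ F, ∀ y ∈ F, (inner ℂ x y : ℂ).im = 0)
include hF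

theorem Orthonormal.complex_of_real {ι : Type*} {v : ι → F} (hv : Orthonormal ℝ v) :
    Orthonormal ℂ (fun i ↦ (v i : E)) := by
  classical
  rw [orthonormal_iff_ite] at hv ⊢
  intro i j
  apply Complex.ext
  · have hre : (inner ℂ (v i : E) (v j)).re = inner ℝ (v i) (v j) :=
      (real_inner_eq_re_inner ℂ _ _).symm
    rw [hre, hv]
    split_ifs <;> simp
  · rw [hF _ (v i).2 _ (v j).2]
    split_ifs <;> simp

noncomputable def OrthonormalBasis.complexOfReal (hspan : ⊤ ≤ Submodule.span ℂ (F : Set E))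
    {ι : Type*} [Fintype ι] (b : OrthonormalBasis ι ℝ F) : OrthonormalBasis ι ℂ E :=
  OrthonormalBasis.mk (b.orthonormal.complex_of_real hF) <| hspan.trans <| by
    refine Submodule.span_le.2 fun x hx ↦ Submodule.span_le_restrictScalars ℝ ℂ _ ?_
    have := Submodule.mem_map_of_mem (f := F.subtype) (b.toBasis.mem_span ⟨x, hx⟩)
    rwa [Submodule.map_span, ← Set.range_comp, b.coe_toBasis] at this

@[simp]
theorem OrthonormalBasis.coe_complexOfReal (hspan : ⊤ ≤ Submodule.span ℂ (F : Set E))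
    {ι : Type*} [Fintype ι] (b : OrthonormalBasis ι ℝ F) :
    ⇑(b.complexOfReal hF hspan) = fun i ↦ (b i : E) :=
  OrthonormalBasis.coe_mk _ _

end RealForm

namespace LinearMap

section StarLinear

variable {E F : Type*} [AddCommGroup E] [Module ℂ E] [AddCommGroup F] [Module ℂ F]

def restrictScalarsReal (f : E →ₗ⋆[ℂ] F) : E →ₗ[ℝ] F where
  toFun := f
  map_add' := f.map_add
  map_smul' r z := by
    rw [RingHom.id_apply, ← algebraMap_smul ℂ r z, map_smulₛₗ, Complex.coe_algebraMap,
      conj_ofReal, Complex.coe_smul]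

@[simp]
theorem restrictScalarsReal_apply (f : E →ₗ⋆[ℂ] F) (z : E) :
    f.restrictScalarsReal z = f z := rfl

end StarLinear

section Conjugation

variable {E : Type*} [NormedAddCommGroup E] [InnerProductSpace ℂ E] {f : E →ₗ⋆[ℂ] E}

theorem im_inner_eq_zero_of_mem_fixedSubmodule
    (hsym : ∀ z₁ z₂ : E, inner ℂ z₁ (f z₂) = inner ℂ z₂ (f z₁))
    {x y : E} (hx : x ∈ f.restrictScalarsReal.fixedSubmodule)
    (hy : y ∈ f.restrictScalarsReal.fixedSubmodule) :
    (inner ℂ x y).im = 0 := by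
  rw [mem_fixedSubmodule_iff, restrictScalarsReal_apply] at hx hy
  have h := hsym x y
  rw [hx, hy, ← inner_conj_symm y x] at h
  exact Complex.conj_eq_iff_im.mp h.symm

theorem top_le_span_fixedSubmodule (hff : ∀ z, f (f z) = z) :
    ⊤ ≤ Submodule.span ℂ (f.restrictScalarsReal.fixedSubmodule : Set E) := by
  intro z _
  have hre : z + f z ∈ f.restrictScalarsReal.fixedSubmodule := by
    rw [mem_fixedSubmodule_iff, restrictScalarsReal_apply, map_add, hff, add_comm]
  have him : I • (z - f z) ∈ f.restrictScalarsReal.fixedSubmodule := by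
    rw [mem_fixedSubmodule_iff, restrictScalarsReal_apply, map_smulₛₗ, map_sub, hff, conj_I,
      neg_smul, ← smul_neg, neg_sub]
  have hz : (2 : ℂ) • z = (z + f z) - I • (I • (z - f z)) := by
    rw [smul_smul, I_mul_I, neg_one_smul, two_smul]
    abel
  rw [← inv_smul_smul₀ (two_ne_zero' ℂ) z, hz]
  exact Submodule.smul_mem _ _ <| Submodule.sub_mem _ (Submodule.subset_span hre) <|
    Submodule.smul_mem _ _ (Submodule.subset_span him)

end Conjugation

end LinearMap

theorem stmt_5_general {E : Type*} [NormedAddCommGroup E] [InnerProductSpace ℂ E]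
    [FiniteDimensional ℂ E]
    (f : E →ₗ⋆[ℂ] E) (hff : ∀ z : E, f (f z) = z)
    (hsym : ∀ z₁ z₂ : E, (inner ℂ z₁ (f z₂) : ℂ) = (inner ℂ z₂ (f z₁) : ℂ)) :
    ∃ b : OrthonormalBasis (Fin (Module.finrank ℂ E)) ℂ E, ∀ j, f (b j) = b j := by
  set F := f.restrictScalarsReal.fixedSubmodule
  have : FiniteDimensional ℝ E := .complexToReal E
  let b := (stdOrthonormalBasis ℝ F).complexOfReal
    (fun _ hx _ hy ↦ f.im_inner_eq_zero_of_mem_fixedSubmodule hsym hx hy)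
    (f.top_le_span_fixedSubmodule hff)
  have hcard : Module.finrank ℝ F = Module.finrank ℂ E := by
    simp [Module.finrank_eq_card_basis b.toBasis]
  refine ⟨b.reindex (finCongr hcard), fun j ↦ ?_⟩
  simp only [b, OrthonormalBasis.reindex_apply, OrthonormalBasis.coe_complexOfReal]
  exact LinearMap.mem_fixedSubmodule_iff.1 (stdOrthonormalBasis ℝ F _).2

/-- If `E` is a nonzero finite-dimensional complex Hilbert space and
`f : E → E` is conjugate-linear with `f ∘ f = Id` and `⟨z₁, f z₂⟩ = ⟨z₂, f z₁⟩`, then there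
is an orthonormal basis of `E` consisting of fixed points of `f`. -/
theorem stmt_5 {E : Type*} [NormedAddCommGroup E] [InnerProductSpace ℂ E]
    [FiniteDimensional ℂ E] [Nontrivial E]
    (f : E →ₗ⋆[ℂ] E) (hff : ∀ z : E, f (f z) = z)
    (hsym : ∀ z₁ z₂ : E, (inner ℂ z₁ (f z₂) : ℂ) = (inner ℂ z₂ (f z₁) : ℂ)) :
    ∃ b : OrthonormalBasis (Fin (Module.finrank ℂ E)) ℂ E, ∀ j, f (b j) = b j :=
  stmt_5_general f hff hsym
end

section
/- Let Z be a complex Hilbert space and T = L + A a symplectomorphism of Z, with L continuous ℂ-linear, self-adjoint and nonnegative, and A continuous conjugate-linear. Then L and A commute (L∘A = A∘L), and A is self-adjoint in the sense that ⟨z₁, A z₂⟩ = ⟨z₂, A z₁⟩ for all z₁, z₂ ∈ Z. -/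
/-!
Let `A†` be the conjugate-linear adjoint of `A`, `⟪z, A† w⟫ = ⟪w, A z⟫`. Evaluating the
symplectic condition at `z` and `i • z` separates its `ℂ`-linear and conjugate-linear parts:
`L² = 1 + A†A` and `LA = A†L`. So `L - A†` is a left inverse of `T`, hence also a right inverse,
and the conjugate-linear part of `T (L - A†) = 1` gives `AL = LA†`.

Then `D = A - A†` is skew and anticommutes with `L`, so `-D²` is a nonnegative operator commuting
with `L`. The product `L(-D²)` is therefore nonnegative, while `⟪z, -L(-D²) z⟫ = ⟪Dz, L Dz⟫ ≥ 0`
makes it nonpositive; hence `LD² = 0`. As `‖L z‖² = ‖z‖² + ‖A z‖²`, `L` is injective, so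
`D² = 0` and `‖D z‖² = ⟪z, -D² z⟫ = 0`: `A = A†`, which gives both claims.
-/

open scoped InnerProductSpace

section AntiAdjoint

variable {𝕜 E F : Type*} [RCLike 𝕜] [NormedAddCommGroup E] [InnerProductSpace 𝕜 E]
  [CompleteSpace E] [NormedAddCommGroup F] [InnerProductSpace 𝕜 F]

noncomputable def ContinuousLinearMap.antiAdjoint (A : E →SL[starRingEnd 𝕜] F) :
    F →SL[starRingEnd 𝕜] E :=
  (InnerProductSpace.toDual 𝕜 E).symm.toLinearIsometry.toContinuousLinearMap.comp
    ((innerSL 𝕜).comp A).flip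

theorem ContinuousLinearMap.inner_antiAdjoint (A : E →SL[starRingEnd 𝕜] F) (w : F) (z : E) :
    ⟪z, A.antiAdjoint w⟫_𝕜 = ⟪w, A z⟫_𝕜 := by
  have h : ⟪A.antiAdjoint w, z⟫_𝕜 = ⟪A z, w⟫_𝕜 := by
    simp [antiAdjoint, InnerProductSpace.toDual_symm_apply]
  rw [← inner_conj_symm, h, inner_conj_symm]

theorem ContinuousLinearMap.inner_sub_antiAdjoint_apply_eq_neg (A : E →SL[starRingEnd 𝕜] E)
    (v w : E) :
    ⟪w, (A - A.antiAdjoint) v⟫_𝕜 = -⟪v, (A - A.antiAdjoint) w⟫_𝕜 := by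
  simp only [sub_apply, inner_sub_right, inner_antiAdjoint]
  ring

end AntiAdjoint

section Skew

variable {𝕜 E : Type*} [RCLike 𝕜] [NormedAddCommGroup E] [InnerProductSpace 𝕜 E]
  {D : E →SL[starRingEnd 𝕜] E}

theorem inner_neg_comp_self_apply_of_skew (hD : ∀ v w, ⟪w, D v⟫_𝕜 = -⟪v, D w⟫_𝕜) (v w : E) :
    ⟪w, (-(D.comp D)) v⟫_𝕜 = ⟪D v, D w⟫_𝕜 := by
  rw [neg_apply, inner_neg_right, ContinuousLinearMap.comp_apply, hD, neg_neg]

theorem isPositive_neg_comp_self_of_skew (hD : ∀ v w, ⟪w, D v⟫_𝕜 = -⟪v, D w⟫_𝕜) :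
    (-(D.comp D)).IsPositive := by
  refine ⟨fun x y => ?_, fun z => ?_⟩
  · change ⟪(-(D.comp D)) x, y⟫_𝕜 = ⟪x, (-(D.comp D)) y⟫_𝕜
    rw [← inner_conj_symm, inner_neg_comp_self_apply_of_skew hD, inner_conj_symm,
      inner_neg_comp_self_apply_of_skew hD]
  · rw [ContinuousLinearMap.reApplyInnerSelf, inner_re_symm,
      inner_neg_comp_self_apply_of_skew hD]
    exact inner_self_nonneg

end Skew

section Anticommute

variable {E : Type*} [NormedAddCommGroup E] [InnerProductSpace ℂ E] [CompleteSpace E]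

theorem mul_neg_comp_self_eq_zero_of_anticommute {L : E →L[ℂ] E} (hL : 0 ≤ L)
    {D : E →SL[starRingEnd ℂ] E} (hD : ∀ v w, ⟪w, D v⟫_ℂ = -⟪v, D w⟫_ℂ)
    (hLD : ∀ z, L (D z) = -D (L z)) :
    L * -(D.comp D) = 0 := by
  have hN : 0 ≤ -(D.comp D) :=
    (ContinuousLinearMap.nonneg_iff_isPositive _).mpr (isPositive_neg_comp_self_of_skew hD)
  have hcomm : Commute L (-(D.comp D)) := by
    ext z
    simp only [mul_apply_eq_comp, neg_apply, ContinuousLinearMap.comp_apply, map_neg, hLD,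
      neg_neg]
  refine le_antisymm ?_ (hcomm.mul_nonneg hL hN)
  rw [ContinuousLinearMap.le_def, zero_sub, ContinuousLinearMap.isPositive_def']
  refine ⟨((hL.isSelfAdjoint.commute_iff hN.isSelfAdjoint).mp hcomm).neg, fun z => ?_⟩
  have hLpos := (ContinuousLinearMap.nonneg_iff_isPositive L).mp hL
  have hDz : ⟪D z, L (D z)⟫_ℂ = ⟪L z, D (D z)⟫_ℂ := by rw [hLD, inner_neg_right, ← hD]
  calc 0 ≤ RCLike.re ⟪D z, L (D z)⟫_ℂ := hLpos.re_inner_nonneg_right (D z)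
    _ = RCLike.re ⟪L (D (D z)), z⟫_ℂ := by
      rw [hDz, hLpos.inner_left_eq_inner_right, inner_re_symm]
    _ = _ := by
      simp only [ContinuousLinearMap.reApplyInnerSelf, neg_apply, mul_apply_eq_comp,
        ContinuousLinearMap.comp_apply, map_neg, neg_neg]

end Anticommute

theorem LinearMap.eq_zero_of_conjLinear_eq_linear {E F : Type*} [AddCommGroup E] [Module ℂ E]
    [AddCommGroup F] [Module ℂ F] (g : E →ₛₗ[starRingEnd ℂ] F) (f : E →ₗ[ℂ] F)
    (h : ∀ z, g z = f z) (z : E) : g z = 0 := by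
  have hI := h (Complex.I • z)
  rw [map_smulₛₗ g, map_smul f, Complex.conj_I, h z] at hI
  rw [h z]
  by_contra hfz
  have := smul_left_injective ℂ hfz hI
  norm_num [Complex.ext_iff] at this

section Symplectic

variable {Z : Type*} [NormedAddCommGroup Z] [InnerProductSpace ℂ Z]

def PreservesSymplecticForm (f : Z → Z) : Prop :=
  ∀ z₁ z₂, (⟪f z₁, f z₂⟫_ℂ).im = (⟪z₁, z₂⟫_ℂ).im

variable {L : Z →L[ℂ] Z} {A : Z →SL[starRingEnd ℂ] Z}

theorem PreservesSymplecticForm.inner_symm_and_inner_sub_inner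
    (hsymp : PreservesSymplecticForm (⇑L + ⇑A)) (z₁ z₂ : Z) :
    ⟪L z₁, A z₂⟫_ℂ = ⟪L z₂, A z₁⟫_ℂ ∧ ⟪L z₁, L z₂⟫_ℂ - ⟪A z₂, A z₁⟫_ℂ = ⟪z₁, z₂⟫_ℂ := by
  have e1 := hsymp z₁ z₂
  have e2 := hsymp (Complex.I • z₁) (Complex.I • z₂)
  have e3 := hsymp (Complex.I • z₁) z₂
  have e4 := hsymp z₁ (Complex.I • z₂)
  simp only [Pi.add_apply, map_smul, map_smulₛₗ, map_neg, Complex.conj_I, neg_neg,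
    inner_add_left, inner_add_right, inner_smul_left, inner_smul_right, Complex.add_re,
    Complex.add_im, Complex.mul_re, Complex.mul_im, Complex.neg_re, Complex.neg_im, Complex.I_re,
    Complex.I_im] at e1 e2 e3 e4
  rw [← inner_conj_symm (L z₂), ← inner_conj_symm (A z₂), Complex.ext_iff, Complex.ext_iff]
  simp only [Complex.sub_re, Complex.sub_im, Complex.conj_re, Complex.conj_im]
  refine ⟨⟨?_, ?_⟩, ?_, ?_⟩ <;> linarith

theorem PreservesSymplecticForm.eq_zero_of_apply_eq_zero
    (hsymp : PreservesSymplecticForm (⇑L + ⇑A)) {z : Z} (hz : L z = 0) : z = 0 := by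
  have h := (hsymp.inner_symm_and_inner_sub_inner z z).2
  rw [hz, inner_zero_left, zero_sub, inner_self_eq_norm_sq_to_K, inner_self_eq_norm_sq_to_K]
    at h
  have h' : ‖z‖ ^ 2 = -‖A z‖ ^ 2 := by exact_mod_cast h.symm
  exact norm_eq_zero.mp (by nlinarith [norm_nonneg z])

variable [CompleteSpace Z]

theorem PreservesSymplecticForm.apply_conjLinear_eq_antiAdjoint_apply
    (hsymp : PreservesSymplecticForm (⇑L + ⇑A)) (hL : IsSelfAdjoint L) (z : Z) :
    L (A z) = A.antiAdjoint (L z) :=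
  ext_inner_left ℂ fun v => by
    rw [A.inner_antiAdjoint, ← hL.isSymmetric.apply_clm,
      (hsymp.inner_symm_and_inner_sub_inner v z).1]

theorem PreservesSymplecticForm.apply_apply_eq_add_antiAdjoint_apply
    (hsymp : PreservesSymplecticForm (⇑L + ⇑A)) (hL : IsSelfAdjoint L) (z : Z) :
    L (L z) = z + A.antiAdjoint (A z) :=
  ext_inner_left ℂ fun v => by
    rw [inner_add_right, A.inner_antiAdjoint, ← hL.isSymmetric.apply_clm,
      ← (hsymp.inner_symm_and_inner_sub_inner v z).2, sub_add_cancel]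

theorem PreservesSymplecticForm.conjLinear_apply_eq_apply_antiAdjoint
    (hsymp : PreservesSymplecticForm (⇑L + ⇑A)) (hL : IsSelfAdjoint L)
    (hsurj : Function.Surjective (⇑L + ⇑A)) (z : Z) :
    A (L z) = L (A.antiAdjoint z) := by
  have hleft : ∀ y, L (L y + A y) - A.antiAdjoint (L y + A y) = y := fun y => by
    rw [map_add, map_add, hsymp.apply_apply_eq_add_antiAdjoint_apply hL,
      hsymp.apply_conjLinear_eq_antiAdjoint_apply hL]
    abel
  have hright : ∀ x, L (L x - A.antiAdjoint x) + A (L x - A.antiAdjoint x) = x := fun x => by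
    obtain ⟨y, rfl⟩ := hsurj x
    exact congrArg (⇑L + ⇑A) (hleft y)
  have hsplit : ∀ x, (A.comp L - L.comp A.antiAdjoint) x =
      (A.comp A.antiAdjoint - A.antiAdjoint.comp A) x := fun x => by
    have h := hright x
    rw [map_sub, map_sub, hsymp.apply_apply_eq_add_antiAdjoint_apply hL] at h
    simp only [sub_apply, ContinuousLinearMap.comp_apply]
    linear_combination (norm := abel) h
  exact sub_eq_zero.mp <| LinearMap.eq_zero_of_conjLinear_eq_linear
    (A.comp L - L.comp A.antiAdjoint).toLinearMap
    (A.comp A.antiAdjoint - A.antiAdjoint.comp A).toLinearMap hsplit z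

end Symplectic

/-- If `T = L + A` is a symplectomorphism of the complex Hilbert space `Z`,
with `L` continuous `ℂ`-linear, self-adjoint and nonnegative, and `A` continuous
conjugate-linear, then `L` and `A` commute and `A` is self-adjoint in the sense that
`⟨z₁, A z₂⟩ = ⟨z₂, A z₁⟩`. -/
theorem stmt_6 {Z : Type*} [NormedAddCommGroup Z] [InnerProductSpace ℂ Z] [CompleteSpace Z]
    (T : Z ≃L[ℝ] Z) (L : Z →L[ℂ] Z) (A : Z →SL[starRingEnd ℂ] Z)
    (hT : ∀ z : Z, T z = L z + A z)
    (hsymp : ∀ z₁ z₂ : Z, (inner ℂ (T z₁) (T z₂) : ℂ).im = (inner ℂ z₁ z₂ : ℂ).im)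
    (hLsa : IsSelfAdjoint L) (hLpos : ∀ z : Z, 0 ≤ (inner ℂ z (L z) : ℂ).re) :
    (∀ z : Z, L (A z) = A (L z)) ∧
    (∀ z₁ z₂ : Z, (inner ℂ z₁ (A z₂) : ℂ) = (inner ℂ z₂ (A z₁) : ℂ)) := by
  have hTLA : ⇑T = ⇑L + ⇑A := funext hT
  have hsymp' : PreservesSymplecticForm (⇑L + ⇑A) := hTLA ▸ hsymp
  have hsurj : Function.Surjective (⇑L + ⇑A) := hTLA ▸ T.surjective
  have hL : 0 ≤ L := by
    rw [ContinuousLinearMap.nonneg_iff_isPositive, ContinuousLinearMap.isPositive_def']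
    refine ⟨hLsa, fun z => ?_⟩
    rw [ContinuousLinearMap.reApplyInnerSelf, inner_re_symm]
    exact hLpos z
  have hLA := hsymp'.apply_conjLinear_eq_antiAdjoint_apply hLsa
  have hAL := hsymp'.conjLinear_apply_eq_apply_antiAdjoint hLsa hsurj
  set D := A - A.antiAdjoint
  have hLD : ∀ z, L (D z) = -D (L z) := fun z => by
    simp only [D, sub_apply, map_sub, hLA, hAL, neg_sub]
  have hD : ∀ z, D z = 0 := fun z => by
    have hN : (-(D.comp D)) z = 0 := hsymp'.eq_zero_of_apply_eq_zero <| by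
      rw [← mul_apply_eq_comp,
        mul_neg_comp_self_eq_zero_of_anticommute hL A.inner_sub_antiAdjoint_apply_eq_neg hLD,
        zero_apply]
    rw [← inner_self_eq_zero (𝕜 := ℂ), ← inner_neg_comp_self_apply_of_skew
      A.inner_sub_antiAdjoint_apply_eq_neg, hN, inner_zero_right]
  have hA : ∀ z, A z = A.antiAdjoint z := fun z => sub_eq_zero.mp (hD z)
  exact ⟨fun z => by rw [hLA, ← hA], fun z₁ z₂ => by rw [hA, A.inner_antiAdjoint]⟩
end

section
/- Let Z be a complex Hilbert space, B a continuous ℂ-linear operator on Z which is self-adjoint and nonnegative, and A : Z → Z a continuous conjugate-linear map such that A∘B = B∘A. Then A commutes with the nonnegative self-adjoint square root of B: A∘√B = √B∘A. -/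
/-!
The operators `T` such that both `T` and `T⋆` commute with the conjugate-linear map `A` form a
norm-closed real star-subalgebra of `Z →L[ℂ] Z`. Since `B` is self-adjoint and commutes with
`A`, it lies in this subalgebra, and a closed star-subalgebra is stable under the continuous
functional calculus; in particular it contains `√B = cfcₙ Real.sqrt B`. Existence and uniqueness
of the nonnegative square root are those of `CFC.sqrt`, once nonnegativity in the order of the
C⋆-algebra is identified with `0 ≤ re ⟪z, T z⟫` for self-adjoint `T`.
-/

namespace ContinuousLinearMap

variable {𝕜 E : Type*} [RCLike 𝕜] [NormedAddCommGroup E] [InnerProductSpace 𝕜 E]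
  [CompleteSpace E]

theorem nonneg_iff_isSelfAdjoint_and_re_inner_nonneg (T : E →L[𝕜] E) :
    0 ≤ T ↔ IsSelfAdjoint T ∧ ∀ x, 0 ≤ RCLike.re (inner 𝕜 x (T x)) := by
  rw [nonneg_iff_isPositive, isPositive_def']
  refine and_congr_right fun _ => forall_congr' fun x => ?_
  rw [reApplyInnerSelf, inner_re_symm]

end ContinuousLinearMap

section StarCommutant

variable {E : Type*} [NormedAddCommGroup E] [InnerProductSpace ℂ E] [CompleteSpace E]

def starCommutant (A : E →L⋆[ℂ] E) : StarSubalgebra ℝ (E →L[ℂ] E) where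
  carrier := {T | (∀ z, A (T z) = T (A z)) ∧ ∀ z, A (star T z) = star T (A z)}
  mul_mem' := by
    rintro S T ⟨hS, hS'⟩ ⟨hT, hT'⟩
    exact ⟨fun z => by simp [hS, hT], fun z => by simp [star_mul, hS', hT']⟩
  one_mem' := by simp
  add_mem' := by
    rintro S T ⟨hS, hS'⟩ ⟨hT, hT'⟩
    exact ⟨fun z => by simp [hS, hT], fun z => by simp [hS', hT']⟩
  zero_mem' := by simp
  algebraMap_mem' r := by simp [Algebra.algebraMap_eq_smul_one, map_real_smul A A.continuous]
  star_mem' := fun ⟨h, h'⟩ => ⟨h', by simpa using h⟩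

theorem isClosed_starCommutant (A : E →L⋆[ℂ] E) :
    IsClosed (starCommutant A : Set (E →L[ℂ] E)) := by
  simp only [starCommutant, StarSubalgebra.coe_mk, Subalgebra.coe_mk, Set.ofPred_and,
    Set.ofPred_forall]
  refine .inter (isClosed_iInter fun z => isClosed_eq ?_ ?_)
    (isClosed_iInter fun z => isClosed_eq ?_ ?_) <;> fun_prop

theorem mem_starCommutant_iff_of_isSelfAdjoint {A : E →L⋆[ℂ] E} {B : E →L[ℂ] E}
    (hB : IsSelfAdjoint B) : B ∈ starCommutant A ↔ ∀ z, A (B z) = B (A z) := by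
  change _ ∧ _ ↔ _
  rw [hB.star_eq, and_self]

theorem cfcₙ_mem_starCommutant {A : E →L⋆[ℂ] E} {B : E →L[ℂ] E}
    (hB : B ∈ starCommutant A) (f : ℝ → ℝ) : cfcₙ f B ∈ starCommutant A :=
  cfcₙ_mem (hs := isClosed_starCommutant A) f hB

end StarCommutant

/-- If `B` is a nonnegative self-adjoint continuous operator on a complex
Hilbert space `Z` and `A` is a continuous conjugate-linear map commuting with `B`, then `A`
commutes with the (unique) nonnegative self-adjoint square root `√B` of `B`. -/
theorem stmt_10 {Z : Type*} [NormedAddCommGroup Z] [InnerProductSpace ℂ Z] [CompleteSpace Z]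
    (B : Z →L[ℂ] Z) (hBsa : IsSelfAdjoint B) (hBpos : ∀ z : Z, 0 ≤ (inner ℂ z (B z) : ℂ).re)
    (A : Z →SL[starRingEnd ℂ] Z) (hAB : ∀ z : Z, A (B z) = B (A z)) :
    ∃ S : Z →L[ℂ] Z,
      IsSelfAdjoint S ∧ (∀ z : Z, 0 ≤ (inner ℂ z (S z) : ℂ).re) ∧ S.comp S = B ∧
      (∀ z : Z, A (S z) = S (A z)) ∧
      ∀ S' : Z →L[ℂ] Z, IsSelfAdjoint S' → (∀ z : Z, 0 ≤ (inner ℂ z (S' z) : ℂ).re) →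
        S'.comp S' = B → S' = S := by
  have hB : 0 ≤ B := B.nonneg_iff_isSelfAdjoint_and_re_inner_nonneg.2 ⟨hBsa, hBpos⟩
  obtain ⟨hSsa, hSpos⟩ :=
    (CFC.sqrt B).nonneg_iff_isSelfAdjoint_and_re_inner_nonneg.1 (CFC.sqrt_nonneg B)
  have hAS : CFC.sqrt B ∈ starCommutant A := by
    rw [CFC.sqrt_eq_real_sqrt B hB]
    exact cfcₙ_mem_starCommutant ((mem_starCommutant_iff_of_isSelfAdjoint hBsa).2 hAB) _
  refine ⟨CFC.sqrt B, hSsa, hSpos, CFC.sqrt_mul_sqrt_self B hB,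
    (mem_starCommutant_iff_of_isSelfAdjoint hSsa).1 hAS, fun S' hS'sa hS'pos hS' => ?_⟩
  exact (CFC.sqrt_unique hS'
    (S'.nonneg_iff_isSelfAdjoint_and_re_inner_nonneg.2 ⟨hS'sa, hS'pos⟩)).symm
end

section
/- Fix t > 0, n ≥ 1 and m ≥ 0, and let h_t(x) = (πt)^{−n/2} e^{−‖x‖²/t} for x ∈ ℝ^n. The map p ↦ h_t * p, where (h_t * p)(x) = ∫_{ℝ^n} p(x − y) h_t(y) dy, is a linear bijection from the space of polynomial functions ℝ^n → ℂ of total degree at most m onto itself, and for each polynomial p of degree at most m the difference (h_t * p) − p is a polynomial of degree at most m − 2 (in particular the map preserves the top-degree homogeneous part). -/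
/-!
Since the kernel is a product `∏ᵢ k(yᵢ)` of one-dimensional Gaussians, convolving the monomial
`Xᵃ` with it gives `∏ᵢ Aₐᵢ(Xᵢ)`, where `Aₐ(x) = ∫ (x - s)ᵃ k(s) ds = ∑ⱼ (a choose j) νₐ₋ⱼ xʲ`
and `ν` are the moments of `-s` under `k`. As `ν₀ = 1` and `ν₁ = 0` (the Gaussian is an even
probability density), `Aₐ - Xᵃ` only has monomials of degree `≤ a - 2`, and the same then holds
for `h_t * p - p`. Hence convolution preserves degree `≤ m` and is injective (a nonzero `p` with
`h_t * p = 0` would satisfy `deg p ≤ deg p - 2`), so it is bijective on that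
finite-dimensional space.
-/

open MeasureTheory

noncomputable section

namespace MvPolynomial

open Finset

section restrictTotalDegreeSub

variable (σ R : Type*) [CommSemiring R]

/-- Total degree at most `K - k`, the subtraction taken in `ℤ`: for `K < k` this is `⊥`,
unlike `restrictTotalDegree σ R (K - k)`. -/
def restrictTotalDegreeSub (K k : ℕ) : Submodule R (MvPolynomial σ R) :=
  restrictSupport R {d | d.degree + k ≤ K}

variable {σ R}

theorem restrictTotalDegreeSub_zero (K : ℕ) :
    restrictTotalDegreeSub σ R K 0 = restrictTotalDegree σ R K := rfl

theorem restrictTotalDegreeSub_mono {K L k l : ℕ} (hKL : K ≤ L) (hlk : l ≤ k) :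
    restrictTotalDegreeSub σ R K k ≤ restrictTotalDegreeSub σ R L l :=
  restrictSupport_mono R fun (d : σ →₀ ℕ) (hd : d.degree + k ≤ K) =>
    show d.degree + l ≤ L by omega

theorem restrictTotalDegree_mono {K L : ℕ} (h : K ≤ L) :
    restrictTotalDegree σ R K ≤ restrictTotalDegree σ R L :=
  restrictTotalDegreeSub_mono (k := 0) (l := 0) h le_rfl

theorem restrictTotalDegreeSub_le_restrictTotalDegree (K k : ℕ) :
    restrictTotalDegreeSub σ R K k ≤ restrictTotalDegree σ R (K - k) :=
  restrictSupport_mono R fun (d : σ →₀ ℕ) (hd : d.degree + k ≤ K) =>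
    show d.degree ≤ K - k by omega

theorem mul_mem_restrictTotalDegreeSub {K L k l : ℕ} {u v : MvPolynomial σ R}
    (hu : u ∈ restrictTotalDegreeSub σ R K k) (hv : v ∈ restrictTotalDegreeSub σ R L l) :
    u * v ∈ restrictTotalDegreeSub σ R (K + L) (k + l) := by
  have huv := restrictSupport_add R _ _ ▸ Submodule.mul_mem_mul hu hv
  refine restrictSupport_mono R ?_ huv
  rintro _ ⟨d, hd, e, he, rfl⟩
  simp only [Set.mem_ofPred_eq, map_add] at hd he ⊢
  omega

theorem eq_zero_of_mem_restrictTotalDegreeSub_totalDegree {k : ℕ} (hk : 0 < k)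
    {p : MvPolynomial σ R} (hp : p ∈ restrictTotalDegreeSub σ R p.totalDegree k) : p = 0 := by
  by_contra hne
  obtain ⟨d, hd, hdeg⟩ := Finset.exists_mem_eq_sup p.support (support_nonempty.mpr hne)
    fun d => d.sum fun _ e => e
  have hd : d.degree + k ≤ p.totalDegree := (mem_restrictSupport_iff R).mp hp hd
  have : d.degree + k ≤ d.degree := by rwa [totalDegree, hdeg] at hd
  omega

end restrictTotalDegreeSub

variable {σ R : Type*} [CommRing R]

/-- `𝔼[(Xᵢ + Z)ᵃ]` for a random variable `Z` with moments `ν`. -/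
def appell (ν : ℕ → R) (a : ℕ) (i : σ) : MvPolynomial σ R :=
  ∑ j ∈ range (a + 1), C (a.choose j * ν (a - j)) * X i ^ j

theorem eval_appell (ν : ℕ → R) (a : ℕ) (i : σ) (z : σ → R) :
    eval z (appell ν a i) = ∑ j ∈ range (a + 1), a.choose j * ν (a - j) * z i ^ j := by
  simp [appell]

theorem X_pow_mem_restrictTotalDegree (i : σ) (j : ℕ) :
    X i ^ j ∈ restrictTotalDegree σ R j := by
  rw [X_pow_eq_monomial, ← restrictTotalDegreeSub_zero, restrictTotalDegreeSub,
    monomial_mem_restrictSupport]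
  simp

theorem appell_mem_restrictTotalDegree (ν : ℕ → R) (a : ℕ) (i : σ) :
    appell ν a i ∈ restrictTotalDegree σ R a := by
  refine Submodule.sum_mem _ fun j hj => ?_
  rw [← smul_eq_C_mul]
  exact Submodule.smul_mem _ _ <|
    restrictTotalDegree_mono (by simp at hj; omega) (X_pow_mem_restrictTotalDegree i j)

theorem appell_sub_X_pow_mem (ν : ℕ → R) (h0 : ν 0 = 1) (h1 : ν 1 = 0) (a : ℕ) (i : σ) :
    appell ν a i - X i ^ a ∈ restrictTotalDegreeSub σ R a 2 := by
  rw [appell, sum_range_succ, Nat.choose_self, Nat.sub_self, h0, Nat.cast_one, mul_one, C_1,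
    one_mul, add_sub_cancel_right]
  refine Submodule.sum_mem _ fun j hj => ?_
  rw [C_mul_X_pow_eq_monomial, restrictTotalDegreeSub, monomial_mem_restrictSupport]
  rcases (show j + 2 ≤ a ∨ a - j = 1 by simp at hj; omega) with hja | hja
  · left; simpa using hja
  · right; rw [hja, h1, mul_zero]

theorem prod_sub_prod_mem_restrictTotalDegreeSub {ι : Type*} (s : Finset ι)
    (f g : ι → MvPolynomial σ R) (D : ι → ℕ) {k : ℕ}
    (hf : ∀ i ∈ s, f i ∈ restrictTotalDegree σ R (D i))
    (hfg : ∀ i ∈ s, g i - f i ∈ restrictTotalDegreeSub σ R (D i) k) :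
    ∏ i ∈ s, g i - ∏ i ∈ s, f i ∈ restrictTotalDegreeSub σ R (∑ i ∈ s, D i) k := by
  classical
  induction s using Finset.induction_on with
  | empty => simp
  | insert a s ha ih =>
    rw [prod_insert ha, prod_insert ha, sum_insert ha,
      show g a * ∏ i ∈ s, g i - f a * ∏ i ∈ s, f i
        = g a * (∏ i ∈ s, g i - ∏ i ∈ s, f i) + (g a - f a) * ∏ i ∈ s, f i by ring]
    have hga : g a ∈ restrictTotalDegree σ R (D a) := by
      simpa using Submodule.add_mem _ (hf a (mem_insert_self a s))
        (restrictTotalDegreeSub_mono le_rfl (Nat.zero_le k) (hfg a (mem_insert_self a s)))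
    have hfs : ∏ i ∈ s, f i ∈ restrictTotalDegreeSub σ R (∑ i ∈ s, D i) 0 :=
      (mem_restrictTotalDegree _ _ _).mpr <| (totalDegree_finsetProd _ _).trans <|
        sum_le_sum fun i hi => (mem_restrictTotalDegree _ _ _).mp (hf i (mem_insert_of_mem hi))
    refine Submodule.add_mem _ ?_ ?_
    · simpa using mul_mem_restrictTotalDegreeSub (k := 0) hga
        (ih (fun i hi => hf i (mem_insert_of_mem hi)) fun i hi => hfg i (mem_insert_of_mem hi))
    · simpa using mul_mem_restrictTotalDegreeSub (hfg a (mem_insert_self a s)) hfs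

variable [Fintype σ]

def appellMap (ν : ℕ → R) : MvPolynomial σ R →ₗ[R] MvPolynomial σ R :=
  (basisMonomials σ R).constr R fun a => ∏ i, appell ν (a i) i

theorem appellMap_apply (ν : ℕ → R) (p : MvPolynomial σ R) :
    appellMap ν p = ∑ a ∈ p.support, coeff a p • ∏ i, appell ν (a i) i := by
  rw [appellMap, Module.Basis.constr_apply]
  rfl

theorem appellMap_mem_restrictTotalDegree (ν : ℕ → R) {m : ℕ} {p : MvPolynomial σ R}
    (hp : p ∈ restrictTotalDegree σ R m) : appellMap ν p ∈ restrictTotalDegree σ R m := by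
  rw [appellMap_apply]
  refine Submodule.sum_mem _ fun a ha => Submodule.smul_mem _ _ ?_
  rw [mem_restrictTotalDegree] at hp ⊢
  calc (∏ i, appell ν (a i) i).totalDegree
      ≤ ∑ i, a i := (totalDegree_finsetProd _ _).trans <| sum_le_sum fun i _ =>
        (mem_restrictTotalDegree _ _ _).mp (appell_mem_restrictTotalDegree ν (a i) i)
    _ ≤ m := by rw [← Finsupp.degree_eq_sum]; exact (le_totalDegree ha).trans hp

theorem prod_appell_sub_monomial_mem (ν : ℕ → R) (h0 : ν 0 = 1) (h1 : ν 1 = 0) (a : σ →₀ ℕ) :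
    ∏ i, appell ν (a i) i - monomial a 1 ∈ restrictTotalDegreeSub σ R a.degree 2 := by
  rw [monomial_eq, C_1, one_mul, Finsupp.prod_fintype _ _ fun i => pow_zero _,
    Finsupp.degree_eq_sum]
  exact prod_sub_prod_mem_restrictTotalDegreeSub _ _ _ _
    (fun i _ => X_pow_mem_restrictTotalDegree i (a i))
    fun i _ => appell_sub_X_pow_mem ν h0 h1 (a i) i

theorem appellMap_sub_self_mem (ν : ℕ → R) (h0 : ν 0 = 1) (h1 : ν 1 = 0) {m : ℕ}
    {p : MvPolynomial σ R} (hp : p ∈ restrictTotalDegree σ R m) :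
    appellMap ν p - p ∈ restrictTotalDegreeSub σ R m 2 := by
  have hsum : appellMap ν p - p
      = ∑ a ∈ p.support, coeff a p • (∏ i, appell ν (a i) i - monomial a 1) := by
    conv_lhs => rw [appellMap_apply]; enter [2]; rw [p.as_sum]
    rw [← sum_sub_distrib]
    simp_rw [smul_sub, smul_monomial, smul_eq_mul, mul_one]
  rw [hsum]
  refine Submodule.sum_mem _ fun a ha => Submodule.smul_mem _ _ ?_
  refine restrictTotalDegreeSub_mono ?_ le_rfl (prod_appell_sub_monomial_mem ν h0 h1 a)
  exact le_totalDegree ha |>.trans ((mem_restrictTotalDegree _ _ _).mp hp)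

theorem appellMap_injective (ν : ℕ → R) (h0 : ν 0 = 1) (h1 : ν 1 = 0) :
    Function.Injective (appellMap (σ := σ) ν) := by
  refine (injective_iff_map_eq_zero _).mpr fun p hp => ?_
  have hdrop := appellMap_sub_self_mem ν h0 h1 ((mem_restrictTotalDegree _ _ p).mpr le_rfl)
  rw [hp, zero_sub, neg_mem_iff] at hdrop
  exact eq_zero_of_mem_restrictTotalDegreeSub_totalDegree two_pos hdrop

end MvPolynomial

open MvPolynomial Finset

def negMoment (k : ℝ → ℝ) (j : ℕ) : ℂ := ∫ s : ℝ, (-(s : ℂ)) ^ j * k s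

theorem negMoment_eq_zero_of_odd {k : ℝ → ℝ} (hk : ∀ s, k (-s) = k s) {j : ℕ} (hj : Odd j) :
    negMoment k j = 0 := by
  have hsymm := integral_neg_eq_self (fun s : ℝ => (-(s : ℂ)) ^ j * k s) volume
  simp only [Complex.ofReal_neg, hk, neg_neg] at hsymm
  have hodd : negMoment k j = -negMoment k j := calc
    negMoment k j = ∫ s : ℝ, (s : ℂ) ^ j * k s := hsymm.symm
    _ = -negMoment k j := by simp only [negMoment, hj.neg_pow, neg_mul, integral_neg, neg_neg]
  exact self_eq_neg.mp hodd

theorem integrable_neg_pow_mul {k : ℝ → ℝ} (hk : ∀ j : ℕ, Integrable fun s => s ^ j * k s)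
    (j : ℕ) : Integrable fun s : ℝ => (-(s : ℂ)) ^ j * k s := by
  refine (((hk j).ofReal (𝕜 := ℂ)).const_mul ((-1 : ℂ) ^ j)).congr (.of_forall fun s => ?_)
  simp only [RCLike.ofReal_mul, RCLike.ofReal_pow, neg_pow (s : ℂ)]
  exact (mul_assoc _ _ _).symm

theorem sub_pow_mul_eq_sum (k : ℝ → ℝ) (x s : ℝ) (a : ℕ) :
    ((x - s : ℝ) : ℂ) ^ a * k s
      = ∑ j ∈ range (a + 1), (x : ℂ) ^ j * a.choose j * ((-(s : ℂ)) ^ (a - j) * k s) := by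
  rw [Complex.ofReal_sub, sub_eq_add_neg, add_pow, sum_mul]
  exact sum_congr rfl fun j _ => by ring

theorem integrable_sub_pow_mul {k : ℝ → ℝ} (hk : ∀ j : ℕ, Integrable fun s => s ^ j * k s)
    (x : ℝ) (a : ℕ) : Integrable fun s : ℝ => ((x - s : ℝ) : ℂ) ^ a * k s := by
  simp_rw [sub_pow_mul_eq_sum]
  exact integrable_finsetSum _ fun j _ => (integrable_neg_pow_mul hk _).const_mul _

theorem integral_sub_pow_mul {k : ℝ → ℝ} (hk : ∀ j : ℕ, Integrable fun s => s ^ j * k s)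
    (x : ℝ) (a : ℕ) :
    ∫ s : ℝ, ((x - s : ℝ) : ℂ) ^ a * k s
      = ∑ j ∈ range (a + 1), a.choose j * negMoment k (a - j) * (x : ℂ) ^ j := by
  simp_rw [sub_pow_mul_eq_sum]
  rw [integral_finsetSum _ fun j _ => (integrable_neg_pow_mul hk _).const_mul _]
  refine sum_congr rfl fun j _ => ?_
  rw [integral_const_mul, negMoment]
  ring

theorem integral_eval_sub_mul_prod {σ : Type*} [Fintype σ] {k : ℝ → ℝ}
    (hk : ∀ j : ℕ, Integrable fun s => s ^ j * k s) (p : MvPolynomial σ ℂ) (x : σ → ℝ) :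
    ∫ y : σ → ℝ, eval (fun i => ((x i - y i : ℝ) : ℂ)) p * ((∏ i, k (y i) : ℝ) : ℂ)
      = eval (fun i => (x i : ℂ)) (appellMap (negMoment k) p) := by
  have hexpand : ∀ y : σ → ℝ,
      eval (fun i => ((x i - y i : ℝ) : ℂ)) p * ((∏ i, k (y i) : ℝ) : ℂ)
        = ∑ d ∈ p.support, coeff d p * ∏ i, (((x i - y i : ℝ) : ℂ) ^ d i * k (y i)) := by
    intro y
    rw [eval_eq', sum_mul]
    refine sum_congr rfl fun d _ => ?_
    rw [Complex.ofReal_prod, mul_assoc, ← prod_mul_distrib]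
  simp_rw [hexpand]
  rw [integral_finsetSum _ fun d _ => (Integrable.fintype_prod
    (f := fun i (s : ℝ) => ((x i - s : ℝ) : ℂ) ^ d i * k s)
    fun i => integrable_sub_pow_mul hk (x i) (d i)).const_mul _, appellMap_apply, map_sum]
  refine sum_congr rfl fun d _ => ?_
  rw [integral_const_mul, smul_eval, map_prod, integral_fintype_prod_volume_eq_prod
    (f := fun i (s : ℝ) => ((x i - s : ℝ) : ℂ) ^ d i * k s)]
  simp_rw [integral_sub_pow_mul hk, eval_appell]

def heatKernel (t s : ℝ) : ℝ := (Real.pi * t) ^ (-(1 : ℝ) / 2) * Real.exp (-s ^ 2 / t)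

theorem heatKernel_neg (t s : ℝ) : heatKernel t (-s) = heatKernel t s := by
  simp only [heatKernel, neg_sq]

theorem integrable_pow_mul_heatKernel {t : ℝ} (ht : 0 < t) (j : ℕ) :
    Integrable fun s : ℝ => s ^ j * heatKernel t s := by
  have h := (integrable_rpow_mul_exp_neg_mul_sq (one_div_pos.mpr ht)
    (neg_one_lt_zero.trans_le j.cast_nonneg)).const_mul ((Real.pi * t) ^ (-(1 : ℝ) / 2))
  refine h.congr (.of_forall fun s => ?_)
  simp only [heatKernel, Real.rpow_natCast]
  ring_nf

theorem negMoment_heatKernel_zero {t : ℝ} (ht : 0 < t) : negMoment (heatKernel t) 0 = 1 := by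
  have hgauss : ∫ s : ℝ, Real.exp (-s ^ 2 / t) = (Real.pi * t) ^ (1 / 2 : ℝ) := by
    simpa [div_eq_inv_mul, Real.sqrt_eq_rpow, mul_comm] using integral_gaussian t⁻¹
  simp only [negMoment, pow_zero, one_mul, integral_complex_ofReal, heatKernel, integral_const_mul,
    hgauss]
  rw [← Real.rpow_add (by positivity)]
  norm_num

theorem prod_heatKernel {σ : Type*} [Fintype σ] {t : ℝ} (ht : 0 < t) (y : σ → ℝ) :
    ∏ i, heatKernel t (y i)
      = (Real.pi * t) ^ (-(Fintype.card σ : ℝ) / 2) * Real.exp (-(∑ i, y i ^ 2) / t) := by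
  simp only [heatKernel, prod_mul_distrib, prod_const, ← Real.exp_sum, card_univ]
  rw [← Real.rpow_natCast, ← Real.rpow_mul (by positivity), ← sum_div, ← sum_neg_distrib]
  ring_nf

theorem stmt_18_general (n m : ℕ) (t : ℝ) (ht : 0 < t) :
    ∃ Φ : MvPolynomial.restrictTotalDegree (Fin n) ℂ m ≃ₗ[ℂ]
        MvPolynomial.restrictTotalDegree (Fin n) ℂ m,
      ∀ (p : MvPolynomial (Fin n) ℂ) (hp : p ∈ MvPolynomial.restrictTotalDegree (Fin n) ℂ m),
        (∀ x : Fin n → ℝ,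
          ∫ y : Fin n → ℝ,
              MvPolynomial.eval (fun i => ((x i - y i : ℝ) : ℂ)) p *
                ((((Real.pi * t) ^ (-(n : ℝ) / 2) * Real.exp (-(∑ i, y i ^ 2) / t) : ℝ)) : ℂ)
            = MvPolynomial.eval (fun i => ((x i : ℝ) : ℂ))
                ((Φ ⟨p, hp⟩ : MvPolynomial.restrictTotalDegree (Fin n) ℂ m) :
                  MvPolynomial (Fin n) ℂ)) ∧
        ((Φ ⟨p, hp⟩ : MvPolynomial (Fin n) ℂ) - p) ∈
          MvPolynomial.restrictTotalDegree (Fin n) ℂ (m - 2) := by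
  set ν := negMoment (heatKernel t)
  have h0 : ν 0 = 1 := negMoment_heatKernel_zero ht
  have h1 : ν 1 = 0 := negMoment_eq_zero_of_odd (heatKernel_neg t) odd_one
  let T := (appellMap (σ := Fin n) ν).restrict fun _ => appellMap_mem_restrictTotalDegree ν (m := m)
  have hT : Function.Injective T := fun p q hpq =>
    Subtype.ext (appellMap_injective ν h0 h1 (congrArg Subtype.val hpq))
  refine ⟨LinearEquiv.ofInjectiveEndo T hT, fun p hp => ⟨fun x => ?_, ?_⟩⟩
  · have hker (y : Fin n → ℝ) : (Real.pi * t) ^ (-(n : ℝ) / 2) * Real.exp (-(∑ i, y i ^ 2) / t)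
        = ∏ i, heatKernel t (y i) := by
      rw [prod_heatKernel ht, Fintype.card_fin]
    simp_rw [hker]
    exact integral_eval_sub_mul_prod (integrable_pow_mul_heatKernel ht) p x
  · exact restrictTotalDegreeSub_le_restrictTotalDegree m 2 (appellMap_sub_self_mem ν h0 h1 hp)

/-- Convolution with the heat kernel
`h_t(x) = (πt)^{-n/2} e^{-‖x‖²/t}` is a linear bijection of the space of (complex)
polynomial functions on `ℝ^n` of total degree at most `m` onto itself, and for each such
polynomial `p` the difference `(h_t * p) - p` is a polynomial of total degree at most
`m - 2` (in particular the top-degree homogeneous part is preserved). -/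
theorem stmt_18 (n m : ℕ) (hn : 1 ≤ n) (t : ℝ) (ht : 0 < t) :
    ∃ Φ : MvPolynomial.restrictTotalDegree (Fin n) ℂ m ≃ₗ[ℂ]
        MvPolynomial.restrictTotalDegree (Fin n) ℂ m,
      ∀ (p : MvPolynomial (Fin n) ℂ) (hp : p ∈ MvPolynomial.restrictTotalDegree (Fin n) ℂ m),
        (∀ x : Fin n → ℝ,
          ∫ y : Fin n → ℝ,
              MvPolynomial.eval (fun i => ((x i - y i : ℝ) : ℂ)) p *
                ((((Real.pi * t) ^ (-(n : ℝ) / 2) * Real.exp (-(∑ i, y i ^ 2) / t) : ℝ)) : ℂ)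
            = MvPolynomial.eval (fun i => ((x i : ℝ) : ℂ))
                ((Φ ⟨p, hp⟩ : MvPolynomial.restrictTotalDegree (Fin n) ℂ m) :
                  MvPolynomial (Fin n) ℂ)) ∧
        ((Φ ⟨p, hp⟩ : MvPolynomial (Fin n) ℂ) - p) ∈
          MvPolynomial.restrictTotalDegree (Fin n) ℂ (m - 2) :=
  stmt_18_general n m t ht

end
end
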